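/- Let n ≥ 2 and X_{m,n} = (1 − σ_{n−1}²σ_{n−2}⋯σ_{n−m})⋯(1 − σ_{n−1}²σ_{n−2})(1 − σ_{n−1}²) ∈ K[B_n]. If w ∈ V^{⊗n} satisfies T_n'w = 0 and X_{n−2,n}w = 0, then P_n w lies in the two-sided ideal of T(V) generated by the right pre-relations of degree strictly less than n. -/

import Mathlib

open scoped BigOperators TensorProduct

/-- The tensor algebra `T(V)` of a vector space `V` with basis `v_0, …, v_{N-1}`:
its basis is the set of words in the letters `v_i`, and multiplication is concatenation. -/
abbrev TV (K : Type*) [Field K] (N : ℕ) : Type _ := MonoidAlgebra K (FreeMonoid (Fin N))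

section Ops

variable (K : Type*) [Field K] {N : ℕ}

/-- Swap the letters at (0-based) positions `k-1` and `k` of a list. -/
def swapList {α : Type*} (l : List α) (k : ℕ) : List α :=
  match l[k-1]?, l[k]? with
  | some a, some b => (l.set (k - 1) b).set k a
  | _, _ => l

/-- The braiding coefficient `q_{ab}` for the letters at positions `k-1`, `k`. -/
def coefAt (q : Fin N → Fin N → K) (l : List (Fin N)) (k : ℕ) : K :=
  match l[k-1]?, l[k]? with
  | some a, some b => q a b
  | _, _ => 1

/-- The action of the braid-group generator `σ_k` (paper indexing) on tensor powers of `V`: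
on a word `w` of length `n` with `1 ≤ k ≤ n-1` it swaps the letters at positions `k`, `k+1`
(1-based) and multiplies by the braiding coefficient. -/
noncomputable def sigOp (q : Fin N → Fin N → K) (k : ℕ) : TV K N →ₗ[K] TV K N :=
  (MonoidAlgebra.coeffLinearEquiv K).symm.toLinearMap ∘ₗ Finsupp.lsum K (fun w =>
    if 1 ≤ k ∧ k < (FreeMonoid.toList w).length then
      Finsupp.lsingle (FreeMonoid.ofList (swapList (FreeMonoid.toList w) k)) ∘ₗ
        LinearMap.lsmul K K (coefAt K q (FreeMonoid.toList w) k)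
    else Finsupp.lsingle w) ∘ₗ (MonoidAlgebra.coeffLinearEquiv K).toLinearMap

/-- The operator attached to a word `σ_{i₁}σ_{i₂}⋯σ_{i_r}` in the braid generators. -/
noncomputable def wordOp (q : Fin N → Fin N → K) (l : List ℕ) : Module.End K (TV K N) :=
  (l.map (sigOp K q)).prod

/-- The right differential element `T_n = 1 + σ_{n−1} + σ_{n−1}σ_{n−2} + ⋯ + σ_{n−1}⋯σ_1`
acting on `V^{⊗n}`. -/
noncomputable def TOp (q : Fin N → Fin N → K) (n : ℕ) : Module.End K (TV K N) :=
  ∑ j ∈ Finset.range n, wordOp K q ((List.range' (n - j) j).reverse)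

/-- The left differential element `U_n = 1 + σ_1 + σ_1σ_2 + ⋯ + σ_1σ_2⋯σ_{n−1}`
acting on `V^{⊗n}`. -/
noncomputable def UOp (q : Fin N → Fin N → K) (n : ℕ) : Module.End K (TV K N) :=
  ∑ j ∈ Finset.range n, wordOp K q (List.range' 1 j)

/-- The right Dynkin element `P_n = (1 − σ_{n−1}⋯σ_1)(1 − σ_{n−1}⋯σ_2)⋯(1 − σ_{n−1})`. -/
noncomputable def POp (q : Fin N → Fin N → K) (n : ℕ) : Module.End K (TV K N) :=
  ((List.range' 1 (n - 1)).map (fun j =>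
    1 - wordOp K q ((List.range' j (n - j)).reverse))).prod

/-- The left Dynkin element `Q_n = (1 − σ_1⋯σ_{n−1})(1 − σ_1⋯σ_{n−2})⋯(1 − σ_1)`. -/
noncomputable def QOp (q : Fin N → Fin N → K) (n : ℕ) : Module.End K (TV K N) :=
  (((List.range' 1 (n - 1)).reverse).map (fun m =>
    1 - wordOp K q (List.range' 1 m))).prod

/-- `T_n' = (1 − σ_{n−1}²σ_{n−2}⋯σ_1)(1 − σ_{n−1}²σ_{n−2}⋯σ_2)⋯(1 − σ_{n−1}²)`. -/
noncomputable def TpOp (q : Fin N → Fin N → K) (n : ℕ) : Module.End K (TV K N) :=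
  ((List.range' 1 (n - 1)).map (fun j =>
    1 - wordOp K q ((n - 1) :: (List.range' j (n - j)).reverse))).prod

/-- `U_n' = (1 − σ_1²σ_2⋯σ_{n−1})(1 − σ_1²σ_2⋯σ_{n−2})⋯(1 − σ_1²)`, viewed inside the
operators on `V^{⊗m}` for any `m ≥ n` (standard inclusion `σ_i ↦ σ_i`). -/
noncomputable def UpOp (q : Fin N → Fin N → K) (n : ℕ) : Module.End K (TV K N) :=
  (((List.range' 1 (n - 1)).reverse).map (fun m =>
    1 - wordOp K q (1 :: List.range' 1 m))).prod

/-- `X_{m,n} = (1 − σ_{n−1}²σ_{n−2}⋯σ_{n−m})⋯(1 − σ_{n−1}²σ_{n−2})(1 − σ_{n−1}²)`;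
one has `X_{n-1,n} = T_n'` and `X_{n-2,n} = ι_{n-1}^n(T_{n-1}')`. -/
noncomputable def XOp (q : Fin N → Fin N → K) (n m : ℕ) : Module.End K (TV K N) :=
  ((List.range' (n - m) m).map (fun j =>
    1 - wordOp K q ((n - 1) :: (List.range' j (n - j)).reverse))).prod

/-- The list of generator indices of the Garside element
`Δ_n = (σ_1⋯σ_{n−1})(σ_1⋯σ_{n−2})⋯(σ_1σ_2)σ_1`. -/
def deltaList (n : ℕ) : List ℕ :=
  (((List.range (n - 1)).reverse).map (fun j => List.range' 1 (j + 1))).flatten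

/-- The Garside element `Δ_n` acting on `V^{⊗n}`. -/
noncomputable def deltaOp (q : Fin N → Fin N → K) (n : ℕ) : Module.End K (TV K N) :=
  wordOp K q (deltaList n)

/-- The central element `θ_n = Δ_n²` acting on `V^{⊗n}`. -/
noncomputable def thetaOp (q : Fin N → Fin N → K) (n : ℕ) : Module.End K (TV K N) :=
  deltaOp K q n ^ 2

/-- The degree-`n` component `V^{⊗n}` of the tensor algebra. -/
noncomputable def deg (N n : ℕ) : Submodule K (TV K N) :=
  MonoidAlgebra.supported K K {w : FreeMonoid (Fin N) | (FreeMonoid.toList w).length = n}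

/-- The right differential operator `∂_i^R`: on a monomial `v_{f₁}⋯v_{f_n}` it is
`Σ_{k : f_k = i} (∏_{l>k} q_{i f_l}) · v_{f₁}⋯v̂_{f_k}⋯v_{f_n}`. -/
noncomputable def rdiff (q : Fin N → Fin N → K) (i : Fin N) : TV K N →ₗ[K] TV K N :=
  (MonoidAlgebra.coeffLinearEquiv K).symm.toLinearMap ∘ₗ Finsupp.lsum K (fun w =>
    ∑ k ∈ Finset.range (FreeMonoid.toList w).length,
      if (FreeMonoid.toList w)[k]? = some i then
        Finsupp.lsingle (FreeMonoid.ofList ((FreeMonoid.toList w).eraseIdx k)) ∘ₗ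
          LinearMap.lsmul K K
            ((((FreeMonoid.toList w).drop (k + 1)).map (fun a => q i a)).prod)
      else 0) ∘ₗ (MonoidAlgebra.coeffLinearEquiv K).toLinearMap

/-- The left differential operator `∂_i^L`: on a monomial `v_{f₁}⋯v_{f_n}` it is
`Σ_{k : f_k = i} (∏_{l<k} q_{f_l i}) · v_{f₁}⋯v̂_{f_k}⋯v_{f_n}`. -/
noncomputable def ldiff (q : Fin N → Fin N → K) (i : Fin N) : TV K N →ₗ[K] TV K N :=
  (MonoidAlgebra.coeffLinearEquiv K).symm.toLinearMap ∘ₗ Finsupp.lsum K (fun w =>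
    ∑ k ∈ Finset.range (FreeMonoid.toList w).length,
      if (FreeMonoid.toList w)[k]? = some i then
        Finsupp.lsingle (FreeMonoid.ofList ((FreeMonoid.toList w).eraseIdx k)) ∘ₗ
          LinearMap.lsmul K K
            ((((FreeMonoid.toList w).take k).map (fun a => q a i)).prod)
      else 0) ∘ₗ (MonoidAlgebra.coeffLinearEquiv K).toLinearMap

end Ops

/-- A right pre-relation of degree `n`: a nonzero `v ∈ V^{⊗n}` with `T_n v = 0` such that
`v = P_n w` for some `w` with `ι_{n-1}^n(T_{n-1}') w = X_{n-2,n} w ≠ 0`. -/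
noncomputable def IsRightPreRel (K : Type*) [Field K] {N : ℕ} (q : Fin N → Fin N → K)
    (n : ℕ) (v : TV K N) : Prop :=
  v ≠ 0 ∧ v ∈ deg K N n ∧ TOp K q n v = 0 ∧
    ∃ w ∈ deg K N n, v = POp K q n w ∧ XOp K q n (n - 2) w ≠ 0

/-- The two-sided ideal of the tensor algebra `T(V)` generated by a set `X`,
as a `K`-submodule (the span of all elements `a * x * b` with `x ∈ X`). -/
noncomputable def idealGen (K : Type*) [Field K] {N : ℕ} (X : Set (TV K N)) : Submodule K (TV K N) :=
  Submodule.span K {y : TV K N | ∃ a b : TV K N, ∃ x ∈ X, y = a * x * b}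



section BraidLemmas

variable {K : Type*} [Field K] {N : ℕ} (q : Fin N → Fin N → K)

/-- Basis monomial of `TV`. -/
noncomputable def ms (u : List (Fin N)) (c : K) : TV K N :=
  MonoidAlgebra.single (FreeMonoid.ofList u) c

lemma conj_lsum_single (F : FreeMonoid (Fin N) → K →ₗ[K] (FreeMonoid (Fin N) →₀ K))
    (w : FreeMonoid (Fin N)) (c : K) :
    ((MonoidAlgebra.coeffLinearEquiv K).symm.toLinearMap ∘ₗ Finsupp.lsum K F ∘ₗ
      (MonoidAlgebra.coeffLinearEquiv K).toLinearMap) (MonoidAlgebra.single w c) =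
      MonoidAlgebra.ofCoeff (F w c) := by
  simp [Finsupp.lsum_single]

lemma ms_mul (u v : List (Fin N)) (c d : K) :
    ms u c * ms v d = ms (u ++ v) (c * d) := by
  simpa [ms, FreeMonoid.ofList_append] using
    (MonoidAlgebra.single_mul_single (R := K) (m₁ := FreeMonoid.ofList u)
      (m₂ := FreeMonoid.ofList v) (r₁ := c) (r₂ := d))

lemma ms_smul (r : K) (u : List (Fin N)) (c : K) : r • ms u c = ms u (r * c) := by
  simp [ms, Finsupp.smul_single, smul_eq_mul]

/-- extensionality for linear maps on `TV` via monomials. -/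
lemma ms_ext {M : Type*} [AddCommMonoid M] [Module K M] {f g : TV K N →ₗ[K] M}
    (h : ∀ (u : List (Fin N)) (c : K), f (ms u c) = g (ms u c)) : f = g := by
  apply MonoidAlgebra.lhom_ext'
  intro a
  apply LinearMap.ext
  intro b
  have := h (FreeMonoid.toList a) b
  simpa [ms, FreeMonoid.ofList_toList] using this

lemma sigOp_ms (k : ℕ) (u : List (Fin N)) (c : K) :
    sigOp K q k (ms u c) =
      if 1 ≤ k ∧ k < u.length then coefAt K q u k • ms (swapList u k) c
      else ms u c := by
  rw [ms, sigOp, conj_lsum_single]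
  rw [FreeMonoid.toList_ofList]
  by_cases h : 1 ≤ k ∧ k < u.length
  · rw [if_pos h, if_pos h, LinearMap.comp_apply, LinearMap.lsmul_apply, Finsupp.lsingle_apply,
      MonoidAlgebra.ofCoeff_single, smul_eq_mul, ms, MonoidAlgebra.smul_single']
  · simp [h, ms]

lemma sigOp_ms_id {k : ℕ} {u : List (Fin N)} (h : ¬ (1 ≤ k ∧ k < u.length)) (c : K) :
    sigOp K q k (ms u c) = ms u c := by rw [sigOp_ms, if_neg h]

lemma swapList_cons {α : Type*} (a : α) (u : List α) (m : ℕ) :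
    swapList (a :: u) (m + 2) = a :: swapList u (m + 1) := by
  show (match (a :: u)[m+2-1]?, (a :: u)[m+2]? with
        | some x, some y => ((a :: u).set (m+2-1) y).set (m+2) x
        | _, _ => a :: u) = a :: swapList u (m+1)
  have h1 : (a :: u)[m+2-1]? = u[m+1-1]? := by
    simp [List.getElem?_cons_succ]
  have h2 : (a :: u)[m+2]? = u[m+1]? := List.getElem?_cons_succ
  rw [h1, h2]
  unfold swapList
  cases hx : u[m+1-1]? with
  | none => cases hy : u[m+1]? <;> rfl
  | some x =>
    cases hy : u[m+1]? with
    | none => rfl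
    | some y =>
      simp only []
      show ((a :: u).set (m+1) y).set (m+2) x = a :: (u.set (m+1-1) y).set (m+1) x
      rw [show m+1-1 = m from rfl, List.set_cons_succ, List.set_cons_succ]

lemma coefAt_cons (a : Fin N) (u : List (Fin N)) (m : ℕ) :
    coefAt K q (a :: u) (m + 2) = coefAt K q u (m + 1) := by
  unfold coefAt
  have h1 : (a :: u)[m+2-1]? = u[m+1-1]? := by
    simp [List.getElem?_cons_succ]
  have h2 : (a :: u)[m+2]? = u[m+1]? := List.getElem?_cons_succ
  rw [h1, h2]

lemma sigOp_one_ms (a b : Fin N) (u : List (Fin N)) (c : K) :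
    sigOp K q 1 (ms (a :: b :: u) c) = q a b • ms (b :: a :: u) c := by
  rw [sigOp_ms, if_pos ⟨le_refl 1, by simp⟩]
  congr 1

lemma sigOp_shift_ms (k : ℕ) (hk : 1 ≤ k) (a : Fin N) (u : List (Fin N)) (c : K) :
    sigOp K q (k + 1) (ms (a :: u) c) = ms [a] 1 * sigOp K q k (ms u c) := by
  obtain ⟨m, rfl⟩ : ∃ m, k = m + 1 := ⟨k - 1, (Nat.succ_pred_eq_of_pos hk).symm⟩
  rw [sigOp_ms, sigOp_ms]
  by_cases h : m + 1 < u.length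
  · rw [if_pos ⟨by omega, by simpa using Nat.succ_lt_succ h⟩, if_pos ⟨by omega, h⟩,
      swapList_cons, coefAt_cons]
    rw [mul_smul_comm, ms_mul, one_mul, List.singleton_append]
  · rw [if_neg (by simp; omega), if_neg (by omega), ms_mul, one_mul, List.singleton_append]

end BraidLemmas

section BraidLemmas2

variable {K : Type*} [Field K] {N : ℕ} (q : Fin N → Fin N → K)

lemma ms_cons (a : Fin N) (u : List (Fin N)) (c : K) :
    ms [a] 1 * ms u c = ms (a :: u) c := by
  rw [ms_mul, one_mul, List.singleton_append]

lemma sigOp_shift (k : ℕ) (hk : 1 ≤ k) (a : Fin N) (x : TV K N) :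
    sigOp K q (k + 1) (ms [a] 1 * x) = ms [a] 1 * sigOp K q k x := by
  have h : (sigOp K q (k+1)) ∘ₗ (LinearMap.mulLeft K (ms [a] 1)) =
      (LinearMap.mulLeft K (ms [a] 1)) ∘ₗ (sigOp K q k) := by
    apply ms_ext
    intro u c
    simp only [LinearMap.comp_apply, LinearMap.mulLeft_apply, ms_cons]
    rw [sigOp_shift_ms _ _ hk]
  simpa using LinearMap.congr_fun h x

lemma sigOp_one_lmul (a b : Fin N) (x : TV K N) :
    sigOp K q 1 (ms [a] 1 * (ms [b] 1 * x)) = q a b • (ms [b] 1 * (ms [a] 1 * x)) := by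
  have h : (sigOp K q 1) ∘ₗ (LinearMap.mulLeft K (ms [a] 1)) ∘ₗ (LinearMap.mulLeft K (ms [b] 1)) =
      q a b • ((LinearMap.mulLeft K (ms [b] 1)) ∘ₗ (LinearMap.mulLeft K (ms [a] 1))) := by
    apply ms_ext
    intro u c
    simp only [LinearMap.comp_apply, LinearMap.mulLeft_apply, LinearMap.smul_apply, ms_cons]
    rw [sigOp_one_ms]
  simpa using LinearMap.congr_fun h x

lemma sigOp_zero_eq : sigOp K q 0 = (1 : Module.End K (TV K N)) := by
  apply ms_ext
  intro u c
  rw [sigOp_ms, if_neg (by omega)]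
  rfl

lemma sigOp_two_ms (a b d : Fin N) (u : List (Fin N)) (c : K) :
    sigOp K q 2 (ms (a :: b :: d :: u) c) = q b d • ms (a :: d :: b :: u) c := by
  rw [show (2:ℕ) = 1 + 1 from rfl, sigOp_shift_ms _ _ le_rfl, sigOp_one_ms,
    mul_smul_comm, ms_cons]

/-- distant commutation, global. -/
lemma sigOp_comm (s : ℕ) : ∀ (t : ℕ), s + 2 ≤ t →
    sigOp K q s * sigOp K q t = sigOp K q t * sigOp K q s := by
  induction s using Nat.strong_induction_on with
  | _ s ih =>
    intro t hst
    match s with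
    | 0 => rw [sigOp_zero_eq, one_mul, mul_one]
    | 1 =>
      obtain ⟨t', rfl⟩ : ∃ t', t = t' + 3 := ⟨t - 3, by omega⟩
      apply ms_ext
      intro u c
      simp only [Module.End.mul_apply]
      match u with
      | [] => simp [sigOp_ms]
      | [x] => simp [sigOp_ms]
      | a :: b :: w =>
        have e3 : ∀ (x y : Fin N) (c' : K), sigOp K q (t' + 3) (ms (x :: y :: w) c') =
            ms [x] 1 * (ms [y] 1 * sigOp K q (t' + 1) (ms w c')) := by
          intro x y c'
          rw [show t' + 3 = (t' + 2) + 1 from rfl, sigOp_shift_ms _ _ (by omega),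
            show t' + 2 = (t' + 1) + 1 from rfl, sigOp_shift_ms _ _ (by omega)]
        rw [e3 a b, sigOp_one_lmul, sigOp_one_ms, map_smul, e3 b a]
    | (s' + 2) =>
      obtain ⟨t', rfl⟩ : ∃ t', t = t' + 1 := ⟨t - 1, by omega⟩
      apply ms_ext
      intro u c
      simp only [Module.End.mul_apply]
      match u with
      | [] => simp [sigOp_ms]
      | a :: w =>
        have hm1 : ∀ c', sigOp K q (t' + 1) (ms (a :: w) c') =
            ms [a] 1 * sigOp K q t' (ms w c') := fun c' =>
          sigOp_shift_ms q t' (by omega) a w c'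
        have hm2 : ∀ c', sigOp K q (s' + 2) (ms (a :: w) c') =
            ms [a] 1 * sigOp K q (s' + 1) (ms w c') := fun c' =>
          sigOp_shift_ms q (s' + 1) (by omega) a w c'
        have hs1 : ∀ x, sigOp K q (t' + 1) (ms [a] 1 * x) =
            ms [a] 1 * sigOp K q t' x := sigOp_shift q t' (by omega) a
        have hs2 : ∀ x, sigOp K q (s' + 2) (ms [a] 1 * x) =
            ms [a] 1 * sigOp K q (s' + 1) x := fun x =>
          sigOp_shift q (s' + 1) (by omega) a x
        simp only [hm1, hm2, hs1, hs2]
        have := LinearMap.congr_fun (ih (s' + 1) (by omega) t' (by omega)) (ms w c)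
        simp only [Module.End.mul_apply] at this
        rw [this]

/-- braid relation on long enough monomials. -/
lemma braid_ms (k : ℕ) (hk : 1 ≤ k) : ∀ (u : List (Fin N)), k + 2 ≤ u.length → ∀ (c : K),
    sigOp K q k (sigOp K q (k+1) (sigOp K q k (ms u c))) =
    sigOp K q (k+1) (sigOp K q k (sigOp K q (k+1) (ms u c))) := by
  induction k, hk using Nat.le_induction with
  | base =>
    intro u hu c
    match u, hu with
    | a :: b :: d :: w, _ =>
      rw [show (1:ℕ) + 1 = 2 from rfl]
      simp only [sigOp_one_ms, sigOp_two_ms, map_smul, ms_smul]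
      congr 1
      ring
  | succ n hn ih =>
    intro u hu c
    match u with
    | a :: w =>
      have hw : n + 2 ≤ w.length := by simpa using Nat.le_of_succ_le_succ hu
      have hm1 : ∀ c', sigOp K q (n + 1) (ms (a :: w) c') =
          ms [a] 1 * sigOp K q n (ms w c') := fun c' => sigOp_shift_ms q n hn a w c'
      have hm2 : ∀ c', sigOp K q (n + 1 + 1) (ms (a :: w) c') =
          ms [a] 1 * sigOp K q (n + 1) (ms w c') := fun c' =>
        sigOp_shift_ms q (n + 1) (by omega) a w c'
      have hs1 : ∀ x, sigOp K q (n + 1) (ms [a] 1 * x) =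
          ms [a] 1 * sigOp K q n x := sigOp_shift q n hn a
      have hs2 : ∀ x, sigOp K q (n + 1 + 1) (ms [a] 1 * x) =
          ms [a] 1 * sigOp K q (n + 1) x := sigOp_shift q (n + 1) (by omega) a
      simp only [hm1, hm2, hs1, hs2]
      rw [ih w hw c]

lemma wordOp_nil : wordOp K q [] = (1 : Module.End K (TV K N)) := by simp [wordOp]

lemma wordOp_cons (k : ℕ) (l : List ℕ) :
    wordOp K q (k :: l) = sigOp K q k * wordOp K q l := by simp [wordOp]

lemma wordOp_append (l₁ l₂ : List ℕ) :
    wordOp K q (l₁ ++ l₂) = wordOp K q l₁ * wordOp K q l₂ := by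
  simp [wordOp, List.prod_append]

lemma wordOp_singleton (k : ℕ) : wordOp K q [k] = sigOp K q k := by
  simp [wordOp]

end BraidLemmas2

section DegLemmas

variable {K : Type*} [Field K] {N : ℕ} (q : Fin N → Fin N → K)

lemma swapList_length {α : Type*} (l : List α) (k : ℕ) :
    (swapList l k).length = l.length := by
  unfold swapList
  cases l[k-1]? <;> cases l[k]? <;> simp

lemma ms_mem_deg {u : List (Fin N)} {n : ℕ} (h : u.length = n) (c : K) :
    ms u c ∈ deg K N n := by
  simp only [deg, MonoidAlgebra.mem_supported, ms, MonoidAlgebra.coeff_single]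
  intro x hx
  have hx' := Finset.mem_singleton.1 (Finsupp.support_single_subset (Finset.mem_coe.1 hx))
  rw [hx']
  simpa [Set.mem_setOf_eq, FreeMonoid.toList_ofList] using h

lemma deg_apply_mem {A : TV K N →ₗ[K] TV K N} {n : ℕ} {P : Submodule K (TV K N)}
    (h : ∀ u : List (Fin N), u.length = n → A (ms u 1) ∈ P)
    {x : TV K N} (hx : x ∈ deg K N n) : A x ∈ P := by
  rw [deg, MonoidAlgebra.supported_eq_span_single] at hx
  induction hx using Submodule.span_induction with
  | mem y hy =>
    obtain ⟨w, hw, rfl⟩ := hy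
    have := h (FreeMonoid.toList w) hw
    simpa [ms, FreeMonoid.ofList_toList] using this
  | zero => simp
  | add _ _ _ _ h1 h2 => rw [map_add]; exact P.add_mem h1 h2
  | smul r _ _ h1 => rw [map_smul]; exact P.smul_mem r h1

lemma deg_eqOn {A B : TV K N →ₗ[K] TV K N} {n : ℕ}
    (h : ∀ u : List (Fin N), u.length = n → A (ms u 1) = B (ms u 1))
    {x : TV K N} (hx : x ∈ deg K N n) : A x = B x := by
  have := deg_apply_mem (A := A - B) (P := (⊥ : Submodule K (TV K N)))
    (fun u hu => by simp [LinearMap.sub_apply, h u hu]) hx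
  simpa [LinearMap.sub_apply, sub_eq_zero] using this

/-- An operator preserving every degree component. -/
def PresDeg {K : Type*} [Field K] {N : ℕ} (A : Module.End K (TV K N)) : Prop :=
  ∀ n x, x ∈ deg K N n → A x ∈ deg K N n

lemma PresDeg.one : PresDeg (1 : Module.End K (TV K N)) := fun _ _ hx => hx

lemma PresDeg.zero : PresDeg (0 : Module.End K (TV K N)) := by
  intro n x _; simp only [LinearMap.zero_apply]; exact (deg K N n).zero_mem

lemma PresDeg.mul {A B : Module.End K (TV K N)} (hA : PresDeg A) (hB : PresDeg B) :
    PresDeg (A * B) := fun n x hx => hA n _ (hB n x hx)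

lemma PresDeg.add {A B : Module.End K (TV K N)} (hA : PresDeg A) (hB : PresDeg B) :
    PresDeg (A + B) := fun n x hx => by
  simpa only [LinearMap.add_apply] using (deg K N n).add_mem (hA n x hx) (hB n x hx)

lemma PresDeg.neg {A : Module.End K (TV K N)} (hA : PresDeg A) : PresDeg (-A) :=
  fun n x hx => by
    simpa only [LinearMap.neg_apply] using (deg K N n).neg_mem (hA n x hx)

lemma PresDeg.sub {A B : Module.End K (TV K N)} (hA : PresDeg A) (hB : PresDeg B) :
    PresDeg (A - B) := by
  rw [sub_eq_add_neg]; exact hA.add hB.neg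

lemma PresDeg.listProd {l : List (Module.End K (TV K N))}
    (h : ∀ A ∈ l, PresDeg A) : PresDeg l.prod := by
  induction l with
  | nil => simpa using PresDeg.one
  | cons A t ih =>
    rw [List.prod_cons]
    exact (h A (List.mem_cons_self)).mul (ih fun B hB => h B (List.mem_cons_of_mem _ hB))

lemma PresDeg.sum {ι : Type*} {s : Finset ι} {f : ι → Module.End K (TV K N)}
    (h : ∀ i ∈ s, PresDeg (f i)) : PresDeg (∑ i ∈ s, f i) := by
  classical
  induction s using Finset.induction_on with
  | empty => simpa using PresDeg.zero
  | insert _ _ hni ih =>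
    rw [Finset.sum_insert hni]
    exact (h _ (Finset.mem_insert_self _ _)).add
      (ih fun i hi => h i (Finset.mem_insert_of_mem hi))

lemma presDeg_sigOp (k : ℕ) : PresDeg (sigOp K q k) := by
  intro n x hx
  refine deg_apply_mem (fun u hu => ?_) hx
  rw [sigOp_ms]
  split
  · exact (deg K N n).smul_mem _ (ms_mem_deg (by rw [swapList_length, hu]) 1)
  · exact ms_mem_deg hu 1

lemma presDeg_wordOp (l : List ℕ) : PresDeg (wordOp K q l) := by
  refine PresDeg.listProd fun A hA => ?_
  simp only [wordOp, List.mem_map] at hA ⊢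
  obtain ⟨k, _, rfl⟩ := hA
  exact presDeg_sigOp q k

lemma presDeg_one_sub_wordOp (l : List ℕ) : PresDeg (1 - wordOp K q l) :=
  PresDeg.one.sub (presDeg_wordOp q l)

lemma presDeg_TOp (n : ℕ) : PresDeg (TOp K q n) :=
  PresDeg.sum fun _ _ => presDeg_wordOp q _

lemma presDeg_POp (n : ℕ) : PresDeg (POp K q n) := by
  refine PresDeg.listProd fun A hA => ?_
  simp only [POp, List.mem_map] at hA
  obtain ⟨j, _, rfl⟩ := hA
  exact presDeg_one_sub_wordOp q _

lemma presDeg_TpOp (n : ℕ) : PresDeg (TpOp K q n) := by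
  refine PresDeg.listProd fun A hA => ?_
  simp only [TpOp, List.mem_map] at hA
  obtain ⟨j, _, rfl⟩ := hA
  exact presDeg_one_sub_wordOp q _

lemma presDeg_XOp (n m : ℕ) : PresDeg (XOp K q n m) := by
  refine PresDeg.listProd fun A hA => ?_
  simp only [XOp, List.mem_map] at hA
  obtain ⟨j, _, rfl⟩ := hA
  exact presDeg_one_sub_wordOp q _

/-- equality of operators on the degree-`n` component. -/
def DEq {K : Type*} [Field K] {N : ℕ} (n : ℕ) (A B : Module.End K (TV K N)) : Prop :=
  ∀ x ∈ deg K N n, A x = B x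

lemma DEq.refl {n : ℕ} (A : Module.End K (TV K N)) : DEq n A A := fun _ _ => rfl

lemma DEq.of_eq {n : ℕ} {A B : Module.End K (TV K N)} (h : A = B) : DEq n A B :=
  fun x _ => by rw [h]

lemma DEq.symm {n : ℕ} {A B : Module.End K (TV K N)} (h : DEq n A B) : DEq n B A :=
  fun x hx => (h x hx).symm

lemma DEq.trans {n : ℕ} {A B C : Module.End K (TV K N)}
    (h1 : DEq n A B) (h2 : DEq n B C) : DEq n A C :=
  fun x hx => (h1 x hx).trans (h2 x hx)

lemma DEq.mul_left {n : ℕ} {A B : Module.End K (TV K N)} (C : Module.End K (TV K N))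
    (h : DEq n A B) : DEq n (C * A) (C * B) := fun x hx => by
  simp only [Module.End.mul_apply]; rw [h x hx]

lemma DEq.mul_right {n : ℕ} {A B D : Module.End K (TV K N)} (hD : PresDeg D)
    (h : DEq n A B) : DEq n (A * D) (B * D) := fun x hx => by
  simp only [Module.End.mul_apply]; exact h _ (hD n x hx)

lemma DEq.add {n : ℕ} {A B C D : Module.End K (TV K N)}
    (h1 : DEq n A C) (h2 : DEq n B D) : DEq n (A + B) (C + D) := fun x hx => by
  simp only [LinearMap.add_apply]; rw [h1 x hx, h2 x hx]

lemma DEq.sub {n : ℕ} {A B C D : Module.End K (TV K N)}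
    (h1 : DEq n A C) (h2 : DEq n B D) : DEq n (A - B) (C - D) := fun x hx => by
  simp only [LinearMap.sub_apply]; rw [h1 x hx, h2 x hx]

lemma DEq.sum {n : ℕ} {ι : Type*} {s : Finset ι} {f g : ι → Module.End K (TV K N)}
    (h : ∀ i ∈ s, DEq n (f i) (g i)) : DEq n (∑ i ∈ s, f i) (∑ i ∈ s, g i) :=
  fun x hx => by
    simp only [LinearMap.sum_apply]
    exact Finset.sum_congr rfl fun i hi => h i hi x hx

lemma braid_DEq {n k : ℕ} (hk : 1 ≤ k) (hkn : k + 2 ≤ n) :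
    DEq n (sigOp K q k * sigOp K q (k+1) * sigOp K q k)
      (sigOp K q (k+1) * sigOp K q k * sigOp K q (k+1)) := by
  intro x hx
  refine deg_eqOn (fun u hu => ?_) hx
  simp only [Module.End.mul_apply]
  exact braid_ms q k hk u (by omega) 1

end DegLemmas

section Telescope

variable {K : Type*} [Field K] {N : ℕ} (q : Fin N → Fin N → K)

/-- `R_j = σ_{n-1}σ_{n-2}⋯σ_j`. -/
noncomputable def Rop (n j : ℕ) : Module.End K (TV K N) :=
  wordOp K q ((List.range' j (n - j)).reverse)

lemma Rop_self (n : ℕ) : Rop q n n = 1 := by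
  rw [Rop, Nat.sub_self]
  simpa using wordOp_nil q

lemma wordOp_comm_sig {l : List ℕ} {s : ℕ} (h : ∀ t ∈ l, t + 2 ≤ s ∨ s + 2 ≤ t) :
    wordOp K q l * sigOp K q s = sigOp K q s * wordOp K q l := by
  induction l with
  | nil => rw [wordOp_nil, one_mul, mul_one]
  | cons t l ih =>
    have hc : sigOp K q t * sigOp K q s = sigOp K q s * sigOp K q t := by
      rcases h t (List.mem_cons_self) with h' | h'
      · exact sigOp_comm q t s h'
      · exact (sigOp_comm q s t h').symm
    rw [wordOp_cons, mul_assoc, ih (fun t' ht' => h t' (List.mem_cons_of_mem _ ht')),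
      ← mul_assoc, hc, mul_assoc]

lemma range'_split {k m n : ℕ} (hkm : k ≤ m) (hmn : m + 2 ≤ n) :
    List.range' k (n - k) =
      List.range' k (m - k) ++ m :: (m+1) :: List.range' (m + 2) (n - m - 2) := by
  have e1 : (n - k) = (m - k) + (n - m) := by omega
  rw [e1, ← List.range'_append (s := k) (m := m - k) (n := n - m) (step := 1)]
  congr 1
  have e2 : k + 1 * (m - k) = m := by omega
  obtain ⟨p, hp⟩ : ∃ p, n - m = p + 2 := ⟨n - m - 2, by omega⟩
  rw [show n - m - 2 = p by omega, e2, hp, List.range'_succ, List.range'_succ]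

lemma F_rel {n k m : ℕ} (hk : 1 ≤ k) (hkm : k ≤ m) (hmn : m + 2 ≤ n) :
    DEq n (Rop q n k * sigOp K q (m+1)) (sigOp K q m * Rop q n k) := by
  set A := wordOp K q ((List.range' (m + 2) (n - m - 2)).reverse) with hA
  set B := wordOp K q ((List.range' k (m - k)).reverse) with hB
  set s := sigOp K q m with hs
  set s' := sigOp K q (m+1) with hs'
  have hrop : Rop q n k = A * (s' * (s * B)) := by
    rw [Rop, range'_split hkm hmn]
    simp only [List.reverse_append, List.reverse_cons, List.append_assoc,
      List.nil_append, List.cons_append]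
    rw [show (List.range' (m+2) (n-m-2)).reverse ++ (m+1) :: m :: (List.range' k (m-k)).reverse
        = (List.range' (m+2) (n-m-2)).reverse ++ ([m+1] ++ ([m] ++ (List.range' k (m-k)).reverse)) by simp,
      wordOp_append, wordOp_append, wordOp_append, wordOp_singleton, wordOp_singleton]
  have hBcomm : B * s' = s' * B := by
    apply wordOp_comm_sig
    intro t ht
    simp only [List.mem_reverse, List.mem_range'_1] at ht
    omega
  have hAcomm : A * s = s * A := by
    apply wordOp_comm_sig
    intro t ht
    simp only [List.mem_reverse, List.mem_range'_1] at ht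
    omega
  have e1 : Rop q n k * s' = A * ((s' * s * s') * B) := by
    rw [hrop, show A * (s' * (s * B)) * s' = A * (s' * (s * (B * s'))) by noncomm_ring,
      hBcomm]
    noncomm_ring
  have e2 : s * Rop q n k = A * ((s * s' * s) * B) := by
    rw [hrop, ← mul_assoc, ← hAcomm, mul_assoc]
    noncomm_ring
  refine (DEq.of_eq e1).trans (DEq.trans ?_ (DEq.of_eq e2.symm))
  refine DEq.mul_left A ?_
  refine DEq.mul_right (presDeg_wordOp q _) ?_
  exact (braid_DEq q (show 1 ≤ m by omega) hmn).symm

lemma conj_rel {n k : ℕ} (hk : 1 ≤ k) (d : ℕ) : ∀ j, j + d = n - 1 → k ≤ j → 2 ≤ n →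
    DEq n (wordOp K q ((List.range' j d).reverse) * Rop q n k)
      (Rop q n k * wordOp K q ((List.range' (j+1) d).reverse)) := by
  induction d with
  | zero =>
    intro j _ _ _
    simp only [List.range'_zero, List.reverse_nil, wordOp_nil]
    exact DEq.of_eq (by rw [one_mul, mul_one])
  | succ d ih =>
    intro j hjd hkj hn
    have hfact : ∀ (a : ℕ), (List.range' a (d+1)).reverse = (List.range' (a+1) d).reverse ++ [a] := by
      intro a
      rw [List.range'_succ]
      simp
    rw [hfact j, wordOp_append, wordOp_singleton]
    rw [hfact (j+1), wordOp_append, wordOp_singleton]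
    have hF : DEq n (sigOp K q j * Rop q n k) (Rop q n k * sigOp K q (j+1)) :=
      (F_rel q hk hkj (by omega)).symm
    refine (DEq.of_eq (mul_assoc _ _ _)).trans ?_
    refine ((hF.mul_left _).trans ?_)
    refine (DEq.of_eq (mul_assoc _ _ _).symm).trans ?_
    refine DEq.trans ?_ (DEq.of_eq (mul_assoc _ _ _))
    exact (ih (j+1) (by omega) (by omega) hn).mul_right (presDeg_sigOp q _)

lemma Rop_peel {n j : ℕ} (hj : j ≤ n - 1) (hn : 2 ≤ n) :
    Rop q n j = sigOp K q (n-1) * wordOp K q ((List.range' j (n - 1 - j)).reverse) := by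
  rw [Rop, show n - j = (n - 1 - j) + 1 by omega, List.range'_concat,
    show j + 1 * (n - 1 - j) = n - 1 by omega]
  simp only [List.reverse_append, List.reverse_cons, List.reverse_nil, List.nil_append,
    List.singleton_append]
  rw [wordOp_cons]

lemma term_rel {n k j : ℕ} (hk : 1 ≤ k) (hkj : k ≤ j) (hj : j ≤ n - 1) (hn : 2 ≤ n) :
    DEq n (Rop q n j * Rop q n k)
      (sigOp K q (n-1) * (Rop q n k * Rop q n (j+1))) := by
  rw [Rop_peel q hj hn]
  have hR1 : Rop q n (j+1) = wordOp K q ((List.range' (j+1) (n - 1 - j)).reverse) := by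
    rw [Rop, show n - (j+1) = n - 1 - j by omega]
  rw [hR1]
  refine (DEq.of_eq (mul_assoc _ _ _)).trans ?_
  exact (conj_rel q hk (n-1-j) j (by omega) hkj hn).mul_left _

/-- partial sums of the `R_j`. -/
noncomputable def Ssum (n k : ℕ) : Module.End K (TV K N) :=
  ∑ j ∈ Finset.Icc k n, Rop q n j

lemma Ssum_self (n : ℕ) : Ssum q n n = 1 := by
  rw [Ssum, Finset.Icc_self, Finset.sum_singleton, Rop_self]

lemma Ssum_split {n k : ℕ} (hk : k ≤ n) :
    Ssum q n k = Rop q n k + Ssum q n (k+1) := by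
  rw [Ssum, Ssum, show Finset.Icc k n = insert k (Finset.Icc (k+1) n) by
    ext x; simp only [Finset.mem_Icc, Finset.mem_insert]; omega,
    Finset.sum_insert (by simp [Finset.mem_Icc])]

lemma TOp_eq_Ssum (n : ℕ) : TOp K q n = Ssum q n 1 := by
  rw [TOp, Ssum]
  refine Finset.sum_nbij' (fun j => n - j) (fun j => n - j) ?_ ?_ ?_ ?_ ?_
  · intro a ha; simp only [Finset.mem_range] at ha; simp only [Finset.mem_Icc]; omega
  · intro a ha; simp only [Finset.mem_Icc] at ha; simp only [Finset.mem_range]; omega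
  · intro a ha; simp only [Finset.mem_range] at ha; omega
  · intro a ha; simp only [Finset.mem_Icc] at ha; omega
  · intro a ha
    simp only [Finset.mem_range] at ha
    rw [Rop, show n - (n - a) = a by omega]

lemma key_rel {n k : ℕ} (hk : 1 ≤ k) (hkn : k ≤ n - 1) (hn : 2 ≤ n) :
    DEq n (Ssum q n k * (1 - Rop q n k))
      ((1 - sigOp K q (n-1) * Rop q n k) * Ssum q n (k+1)) := by
  have h1 : DEq n (Ssum q n k * Rop q n k)
      (Rop q n k + sigOp K q (n-1) * Rop q n k * Ssum q n (k+1)) := by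
    have hs : Ssum q n k * Rop q n k = ∑ j ∈ Finset.Icc k n, Rop q n j * Rop q n k := by
      rw [Ssum, Finset.sum_mul]
    have hsplit : Finset.Icc k n = insert n (Finset.Icc k (n-1)) := by
      ext x; simp only [Finset.mem_Icc, Finset.mem_insert]; omega
    rw [hs, hsplit, Finset.sum_insert (by simp only [Finset.mem_Icc]; omega), Rop_self, one_mul]
    refine DEq.add (DEq.refl _) ?_
    have hrhs : sigOp K q (n-1) * Rop q n k * Ssum q n (k+1) =
        ∑ j ∈ Finset.Icc k (n-1), sigOp K q (n-1) * Rop q n k * Rop q n (j+1) := by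
      rw [Ssum, Finset.mul_sum]
      refine Finset.sum_nbij' (fun j => j - 1) (fun j => j + 1) ?_ ?_ ?_ ?_ ?_
      · intro a ha; simp only [Finset.mem_Icc] at ha ⊢; omega
      · intro a ha; simp only [Finset.mem_Icc] at ha ⊢; omega
      · intro a ha; simp only [Finset.mem_Icc] at ha; omega
      · intro a ha; simp only [Finset.mem_Icc] at ha; omega
      · intro a ha
        simp only [Finset.mem_Icc] at ha
        rw [show a - 1 + 1 = a by omega]
    rw [hrhs]
    refine DEq.sum fun j hj => ?_
    simp only [Finset.mem_Icc] at hj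
    exact (term_rel q hk hj.1 hj.2 hn).trans (DEq.of_eq (mul_assoc _ _ _).symm)
  intro x hx
  have e1 := h1 x hx
  have e2 := LinearMap.congr_fun (Ssum_split q (show k ≤ n by omega)) x
  simp only [Module.End.mul_apply, LinearMap.sub_apply, Module.End.one_apply,
    LinearMap.add_apply] at e1 e2 ⊢
  rw [map_sub (Ssum q n k), e2, e1]
  abel

noncomputable def prodP (n k : ℕ) : Module.End K (TV K N) :=
  ((List.range' k (n - k)).map (fun j => 1 - Rop q n j)).prod

noncomputable def prodT (n k : ℕ) : Module.End K (TV K N) :=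
  ((List.range' k (n - k)).map
    (fun j => 1 - wordOp K q ((n - 1) :: (List.range' j (n - j)).reverse))).prod

lemma presDeg_prodP (n k : ℕ) : PresDeg (prodP q n k) := by
  refine PresDeg.listProd fun A hA => ?_
  simp only [List.mem_map] at hA
  obtain ⟨j, _, rfl⟩ := hA
  exact PresDeg.one.sub (presDeg_wordOp q _)

lemma telescope (n : ℕ) (hn : 2 ≤ n) (d : ℕ) : ∀ k, 1 ≤ k → k + d = n →
    DEq n (Ssum q n k * prodP q n k) (prodT q n k) := by
  induction d with
  | zero =>
    intro k hk hkd
    have hkn : k = n := by omega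
    subst hkn
    rw [prodP, prodT, Nat.sub_self]
    simp only [List.range'_zero, List.map_nil, List.prod_nil]
    rw [Ssum_self, one_mul]
    exact DEq.refl _
  | succ d ih =>
    intro k hk hkd
    have hr : List.range' k (n - k) = k :: List.range' (k+1) (n - (k+1)) := by
      rw [show n - k = (n - (k+1)) + 1 by omega, List.range'_succ]
    have hP : prodP q n k = (1 - Rop q n k) * prodP q n (k+1) := by
      rw [prodP, hr, List.map_cons, List.prod_cons, prodP]
    have hT : prodT q n k =
        (1 - wordOp K q ((n-1) :: (List.range' k (n - k)).reverse)) * prodT q n (k+1) := by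
      rw [prodT, hr, List.map_cons, List.prod_cons, prodT, ← hr]
    rw [hP, hT, wordOp_cons]
    have hRw : wordOp K q ((List.range' k (n - k)).reverse) = Rop q n k := rfl
    rw [hRw]
    refine (DEq.of_eq (mul_assoc _ _ _).symm).trans ?_
    refine DEq.trans ((key_rel q hk (by omega) hn).mul_right (presDeg_prodP q n (k+1))) ?_
    refine (DEq.of_eq (mul_assoc _ _ _)).trans ?_
    exact (ih (k+1) (by omega) (by omega)).mul_left _

lemma TP_eq_Tp (n : ℕ) (hn : 2 ≤ n) : DEq n (TOp K q n * POp K q n) (TpOp K q n) := by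
  have h := telescope q n hn (n - 1) 1 le_rfl (by omega)
  have hP : POp K q n = prodP q n 1 := rfl
  have hT' : TpOp K q n = prodT q n 1 := rfl
  rw [TOp_eq_Ssum, hP, hT']
  exact h

end Telescope

section DiagShift

variable {K : Type*} [Field K] {N : ℕ} (q : Fin N → Fin N → K)

/-- diagonal scaling operator. -/
noncomputable def diagOp (f : Fin N → K) : Module.End K (TV K N) :=
  (MonoidAlgebra.coeffLinearEquiv K).symm.toLinearMap ∘ₗ
    Finsupp.lsum K (fun w => ((FreeMonoid.toList w).map f).prod • Finsupp.lsingle w) ∘ₗ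
    (MonoidAlgebra.coeffLinearEquiv K).toLinearMap

lemma diagOp_ms (f : Fin N → K) (u : List (Fin N)) (c : K) :
    diagOp f (ms u c) = (u.map f).prod • ms u c := by
  rw [ms, diagOp, conj_lsum_single]
  simp only [FreeMonoid.toList_ofList]
  rfl

lemma swapList_one {α : Type*} (a b : α) (t : List α) :
    swapList (a :: b :: t) 1 = b :: a :: t := by
  unfold swapList
  norm_num

lemma swapList_perm {α : Type*} : ∀ (k : ℕ) (u : List α), 1 ≤ k → k < u.length →
    (swapList u k).Perm u := by
  intro k
  induction k using Nat.strong_induction_on with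
  | _ k ih =>
    intro u hk hku
    match k, u with
    | 1, a :: b :: t => rw [swapList_one]; exact List.Perm.swap a b t
    | 1, [a] => simp at hku
    | 1, [] => simp at hku
    | (m+2), a :: t =>
      rw [show m + 2 = (m+1) + 1 from rfl, swapList_cons]
      exact List.Perm.cons a (ih (m+1) (by omega) t (by omega) (by
        simp only [List.length_cons] at hku; omega))
    | (m+2), [] => simp at hku

lemma diagOp_comm_sigOp (f : Fin N → K) (k : ℕ) :
    diagOp f * sigOp K q k = sigOp K q k * diagOp f := by
  apply ms_ext
  intro u c
  simp only [Module.End.mul_apply]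
  by_cases h : 1 ≤ k ∧ k < u.length
  · rw [sigOp_ms, if_pos h, diagOp_ms, map_smul, map_smul, diagOp_ms, sigOp_ms, if_pos h]
    rw [show ((swapList u k).map f).prod = (u.map f).prod from
      List.Perm.prod_eq ((swapList_perm k u h.1 h.2).map f)]
    rw [smul_comm]
  · rw [sigOp_ms, if_neg h, diagOp_ms, map_smul, sigOp_ms, if_neg h]

lemma comm_wordOp_of_comm_sig {D : Module.End K (TV K N)}
    (hD : ∀ k, D * sigOp K q k = sigOp K q k * D) (l : List ℕ) :
    D * wordOp K q l = wordOp K q l * D := by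
  induction l with
  | nil => rw [wordOp_nil, one_mul, mul_one]
  | cons t l ih => rw [wordOp_cons, ← mul_assoc, hD t, mul_assoc, ih, ← mul_assoc]

lemma comm_listProd {D : Module.End K (TV K N)} {l : List (Module.End K (TV K N))}
    (h : ∀ A ∈ l, D * A = A * D) : D * l.prod = l.prod * D := by
  induction l with
  | nil => simp
  | cons A t ih =>
    rw [List.prod_cons, ← mul_assoc, h A (List.mem_cons_self), mul_assoc,
      ih (fun B hB => h B (List.mem_cons_of_mem _ hB)), ← mul_assoc]

lemma diagOp_comm_wordOp (f : Fin N → K) (l : List ℕ) :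
    diagOp f * wordOp K q l = wordOp K q l * diagOp f :=
  comm_wordOp_of_comm_sig q (diagOp_comm_sigOp q f) l

lemma diagOp_comm_one_sub (f : Fin N → K) (l : List ℕ) :
    diagOp f * (1 - wordOp K q l) = (1 - wordOp K q l) * diagOp f := by
  rw [mul_sub, sub_mul, mul_one, one_mul, diagOp_comm_wordOp]

lemma diagOp_comm_TOp (f : Fin N → K) (n : ℕ) :
    diagOp f * TOp K q n = TOp K q n * diagOp f := by
  rw [TOp, Finset.mul_sum, Finset.sum_mul]
  exact Finset.sum_congr rfl fun j _ => diagOp_comm_wordOp q f _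

lemma diagOp_comm_POp (f : Fin N → K) (n : ℕ) :
    diagOp f * POp K q n = POp K q n * diagOp f := by
  refine comm_listProd fun A hA => ?_
  simp only [POp, List.mem_map] at hA
  obtain ⟨j, _, rfl⟩ := hA
  exact diagOp_comm_one_sub q f _

lemma diagOp_comm_XOp (f : Fin N → K) (n m : ℕ) :
    diagOp f * XOp K q n m = XOp K q n m * diagOp f := by
  refine comm_listProd fun A hA => ?_
  simp only [XOp, List.mem_map] at hA
  obtain ⟨j, _, rfl⟩ := hA
  exact diagOp_comm_one_sub q f _

lemma diagOp_single (f : Fin N → K) (w : FreeMonoid (Fin N)) (c : K) :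
    diagOp f (MonoidAlgebra.single w c) =
      ((FreeMonoid.toList w).map f).prod • MonoidAlgebra.single w c := by
  have := diagOp_ms (N := N) f (FreeMonoid.toList w) c
  simpa [ms, FreeMonoid.ofList_toList] using this

lemma diagOp_mul (f : Fin N → K) (x y : TV K N) :
    diagOp f (x * y) = diagOp f x * diagOp f y := by
  induction x using MonoidAlgebra.induction_linear with
  | zero => simp
  | add x1 x2 h1 h2 => rw [add_mul, map_add, h1, h2, map_add, add_mul]
  | single w c =>
    induction y using MonoidAlgebra.induction_linear with
    | zero => simp
    | add y1 y2 h1 h2 => rw [mul_add, map_add, h1, h2, map_add, mul_add]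
    | single w' c' =>
      rw [show (MonoidAlgebra.single w c : TV K N) = ms (FreeMonoid.toList w) c from by
          simp [ms, FreeMonoid.ofList_toList],
        show (MonoidAlgebra.single w' c' : TV K N) = ms (FreeMonoid.toList w') c' from by
          simp [ms, FreeMonoid.ofList_toList],
        ms_mul, diagOp_ms, diagOp_ms, diagOp_ms, smul_mul_smul_comm, ms_mul,
        List.map_append, List.prod_append]

lemma diagOp_cancel (f : Fin N → K) (hf : ∀ a, f a ≠ 0) (x : TV K N) :
    diagOp (fun a => (f a)⁻¹) (diagOp f x) = x := by
  have h : (diagOp (fun a => (f a)⁻¹) : Module.End K (TV K N)) ∘ₗ diagOp f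
      = LinearMap.id := by
    apply ms_ext
    intro u c
    simp only [LinearMap.comp_apply, diagOp_ms, map_smul, LinearMap.id_apply]
    rw [smul_smul]
    have h2 : (u.map f).prod * (u.map (fun a => (f a)⁻¹)).prod = 1 := by
      rw [mul_comm]
      rw [← List.prod_map_mul]
      refine List.prod_eq_one ?_
      intro x hx
      simp only [List.mem_map] at hx
      obtain ⟨a, _, rfl⟩ := hx
      exact inv_mul_cancel₀ (hf a)
    rw [h2, one_smul]
  exact LinearMap.congr_fun h x

lemma diagOp_ne_zero (f : Fin N → K) (hf : ∀ a, f a ≠ 0) {x : TV K N} (hx : x ≠ 0) :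
    diagOp f x ≠ 0 := by
  intro h0
  apply hx
  rw [← diagOp_cancel f hf x, h0, map_zero]

lemma presDeg_diagOp (f : Fin N → K) : PresDeg (diagOp (K := K) (N := N) f) := by
  intro n x hx
  refine deg_apply_mem (fun u hu => ?_) hx
  rw [diagOp_ms]
  exact (deg K N n).smul_mem _ (ms_mem_deg hu 1)

/-- extract the coefficient of a leading letter. -/
noncomputable def lcoef (i : Fin N) : TV K N →ₗ[K] TV K N :=
  (MonoidAlgebra.coeffLinearEquiv K).symm.toLinearMap ∘ₗ Finsupp.lsum K (fun w =>
    if (FreeMonoid.toList w).head? = some i then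
      Finsupp.lsingle (FreeMonoid.ofList (FreeMonoid.toList w).tail) else 0) ∘ₗ
    (MonoidAlgebra.coeffLinearEquiv K).toLinearMap

lemma lcoef_ms (i : Fin N) (u : List (Fin N)) (c : K) :
    lcoef i (ms u c) = if u.head? = some i then ms u.tail c else 0 := by
  rw [ms, lcoef, conj_lsum_single]
  rw [FreeMonoid.toList_ofList]
  by_cases h : u.head? = some i
  · simp [h, ms]
  · simp [h]

lemma lcoef_lmul (i j : Fin N) (x : TV K N) :
    lcoef i (ms [j] 1 * x) = if j = i then x else 0 := by
  have h : (lcoef (K := K) i) ∘ₗ LinearMap.mulLeft K (ms [j] 1) =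
      (if j = i then (LinearMap.id : TV K N →ₗ[K] TV K N) else 0) := by
    apply ms_ext
    intro u c
    simp only [LinearMap.comp_apply, LinearMap.mulLeft_apply, ms_cons, lcoef_ms,
      List.head?_cons, List.tail_cons, Option.some.injEq]
    by_cases hji : j = i
    · rw [if_pos hji, if_pos hji]; rfl
    · rw [if_neg hji, if_neg hji]; rfl
  have := LinearMap.congr_fun h x
  simp only [LinearMap.comp_apply, LinearMap.mulLeft_apply] at this
  rw [this]
  by_cases hji : j = i
  · rw [if_pos hji, if_pos hji]; rfl
  · rw [if_neg hji, if_neg hji]; rfl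

lemma lcoef_mem_deg {n : ℕ} (i : Fin N) {x : TV K N} (hx : x ∈ deg K N n) :
    lcoef i x ∈ deg K N (n - 1) := by
  refine deg_apply_mem (fun u hu => ?_) hx
  rw [lcoef_ms]
  split
  · exact ms_mem_deg (by rw [List.length_tail, hu]) 1
  · exact (deg K N (n-1)).zero_mem

lemma deg_decomp {n : ℕ} (hn : 1 ≤ n) {x : TV K N} (hx : x ∈ deg K N n) :
    x = ∑ i : Fin N, ms [i] 1 * lcoef i x := by
  have h := deg_eqOn (A := (LinearMap.id : TV K N →ₗ[K] TV K N))
    (B := ∑ i : Fin N, LinearMap.mulLeft K (ms [i] 1) ∘ₗ lcoef i) ?_ hx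
  · simpa [LinearMap.sum_apply, LinearMap.comp_apply, LinearMap.mulLeft_apply] using h
  intro u hu
  match u with
  | [] => simp at hu; omega
  | a :: t =>
    simp only [LinearMap.id_apply, LinearMap.sum_apply, LinearMap.comp_apply,
      LinearMap.mulLeft_apply, lcoef_ms, List.head?_cons, List.tail_cons,
      Option.some.injEq, mul_ite, mul_zero, Finset.sum_ite_eq, Finset.mem_univ,
      if_true, ms_cons]

/-- `A` acts as `id ⊗ B` with respect to splitting off the first tensor factor. -/
def IsShift {K : Type*} [Field K] {N : ℕ} (A B : Module.End K (TV K N)) : Prop :=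
  ∀ (i : Fin N) (x : TV K N), A (ms [i] 1 * x) = ms [i] 1 * B x

lemma IsShift.one : IsShift (1 : Module.End K (TV K N)) 1 := fun _ _ => rfl

lemma IsShift.mul {A A' B B' : Module.End K (TV K N)}
    (hA : IsShift A A') (hB : IsShift B B') : IsShift (A * B) (A' * B') := by
  intro i x
  simp only [Module.End.mul_apply]
  rw [hB i x, hA i (B' x)]

lemma IsShift.sub {A A' B B' : Module.End K (TV K N)}
    (hA : IsShift A A') (hB : IsShift B B') : IsShift (A - B) (A' - B') := by
  intro i x
  simp only [LinearMap.sub_apply]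
  rw [hA i x, hB i x, mul_sub]

lemma isShift_sigOp (k : ℕ) (hk : 1 ≤ k) : IsShift (sigOp K q (k+1)) (sigOp K q k) :=
  fun i x => sigOp_shift q k hk i x

lemma isShift_wordOp (l : List ℕ) (h : ∀ t ∈ l, 1 ≤ t) :
    IsShift (wordOp K q (l.map (· + 1))) (wordOp K q l) := by
  induction l with
  | nil => simpa [wordOp_nil] using IsShift.one
  | cons t l ih =>
    rw [List.map_cons, wordOp_cons, wordOp_cons]
    exact (isShift_sigOp q t (h t (List.mem_cons_self))).mul
      (ih fun s hs => h s (List.mem_cons_of_mem _ hs))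

lemma isShift_prod_map (L : List ℕ) (F G : ℕ → Module.End K (TV K N))
    (h : ∀ j ∈ L, IsShift (F (j+1)) (G j)) :
    IsShift (((L.map (· + 1)).map F).prod) ((L.map G).prod) := by
  induction L with
  | nil => simpa using IsShift.one
  | cons t l ih =>
    simp only [List.map_cons, List.prod_cons]
    exact (h t (List.mem_cons_self)).mul
      (ih fun s hs => h s (List.mem_cons_of_mem _ hs))

lemma range'_map_succ (s n : ℕ) :
    (List.range' s n).map (· + 1) = List.range' (s+1) n := by
  rw [show ((· + 1) : ℕ → ℕ) = (fun x => 1 + x) from funext fun x => Nat.add_comm x 1,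
    List.map_add_range', Nat.add_comm 1 s]

lemma isShift_Rop {n j : ℕ} (hj : 1 ≤ j) :
    IsShift (Rop q (n+1) (j+1)) (Rop q n j) := by
  rw [Rop, Rop, show n + 1 - (j+1) = n - j by omega, ← range'_map_succ,
    ← List.map_reverse]
  exact isShift_wordOp q _ (fun t ht => by
    simp only [List.mem_reverse, List.mem_range'_1] at ht; omega)

lemma rot_ms : ∀ (u : List (Fin N)) (i : Fin N) (c : K),
    wordOp K q ((List.range' 1 u.length).reverse) (ms (i :: u) c) =
      (u.map (q i)).prod • ms (u ++ [i]) c := by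
  intro u
  induction u with
  | nil =>
      intro i c
      simp only [List.length_nil, List.range'_zero, List.reverse_nil, wordOp_nil,
        List.map_nil, List.prod_nil, one_smul, List.nil_append]
      rfl
  | cons a t ih =>
    intro i c
    have hsplit : (List.range' 1 (a :: t).length).reverse
        = (List.range' 2 t.length).reverse ++ [1] := by
      rw [List.length_cons, List.range'_succ]
      simp
    rw [hsplit, wordOp_append, wordOp_singleton, Module.End.mul_apply, sigOp_one_ms,
      map_smul]
    have hW : wordOp K q ((List.range' 2 t.length).reverse) (ms (a :: i :: t) c)
        = ms [a] 1 * wordOp K q ((List.range' 1 t.length).reverse) (ms (i :: t) c) := by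
      rw [← ms_cons, ← range'_map_succ, ← List.map_reverse]
      exact isShift_wordOp q _ (fun s hs => by
        simp only [List.mem_reverse, List.mem_range'_1] at hs; omega) a _
    rw [hW, ih i c, mul_smul_comm, ms_cons, List.map_cons, List.prod_cons, mul_smul]
    simp

lemma rot_lmul {n : ℕ} (i : Fin N) {y : TV K N} (hy : y ∈ deg K N n) :
    Rop q (n+1) 1 (ms [i] 1 * y) = diagOp (q i) y * ms [i] 1 := by
  have h := deg_eqOn (A := (Rop q (n+1) 1 : Module.End K (TV K N)) ∘ₗ
      LinearMap.mulLeft K (ms [i] 1))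
    (B := (LinearMap.mulRight K (ms [i] 1)) ∘ₗ diagOp (q i)) ?_ hy
  · simpa [LinearMap.comp_apply, LinearMap.mulLeft_apply, LinearMap.mulRight_apply] using h
  intro u hu
  simp only [LinearMap.comp_apply, LinearMap.mulLeft_apply, LinearMap.mulRight_apply, ms_cons]
  rw [show Rop q (n+1) 1 = wordOp K q ((List.range' 1 u.length).reverse) by
    rw [Rop, Nat.add_sub_cancel, hu]]
  rw [rot_ms, diagOp_ms, smul_mul_assoc, ms_mul, mul_one]

end DiagShift

section Main

variable {K : Type*} [Field K] {N : ℕ} (q : Fin N → Fin N → K)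

lemma idealGen_mul_left {X : Set (TV K N)} (c : TV K N) {z : TV K N}
    (hz : z ∈ idealGen K X) : c * z ∈ idealGen K X := by
  rw [idealGen] at hz ⊢
  induction hz using Submodule.span_induction with
  | mem y hy =>
    obtain ⟨a, b, x, hx, rfl⟩ := hy
    exact Submodule.subset_span ⟨c * a, b, x, hx, by noncomm_ring⟩
  | zero => simp
  | add y z _ _ h1 h2 => rw [mul_add]; exact Submodule.add_mem _ h1 h2
  | smul r y _ h1 => rw [mul_smul_comm]; exact Submodule.smul_mem _ r h1

lemma idealGen_mul_right {X : Set (TV K N)} (c : TV K N) {z : TV K N}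
    (hz : z ∈ idealGen K X) : z * c ∈ idealGen K X := by
  rw [idealGen] at hz ⊢
  induction hz using Submodule.span_induction with
  | mem y hy =>
    obtain ⟨a, b, x, hx, rfl⟩ := hy
    exact Submodule.subset_span ⟨a, b * c, x, hx, by noncomm_ring⟩
  | zero => simp
  | add y z _ _ h1 h2 => rw [add_mul]; exact Submodule.add_mem _ h1 h2
  | smul r y _ h1 => rw [smul_mul_assoc]; exact Submodule.smul_mem _ r h1

lemma idealGen_mono {X Y : Set (TV K N)} (h : X ⊆ Y) : idealGen K X ≤ idealGen K Y :=
  Submodule.span_mono (fun y hy => by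
    obtain ⟨a, b, x, hx, rfl⟩ := hy
    exact ⟨a, b, x, h hx, rfl⟩)

lemma prerel_diag {k : ℕ} {f : Fin N → K} (hf : ∀ a, f a ≠ 0) {x : TV K N}
    (h : IsRightPreRel K q k x) : IsRightPreRel K q k (diagOp f x) := by
  obtain ⟨hne, hdeg, hT, w, hw, hxw, hXw⟩ := h
  refine ⟨diagOp_ne_zero f hf hne, presDeg_diagOp f k x hdeg, ?_, diagOp f w,
    presDeg_diagOp f k w hw, ?_, ?_⟩
  · have hc := LinearMap.congr_fun (diagOp_comm_TOp q f k) x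
    simp only [Module.End.mul_apply] at hc
    rw [← hc, hT, map_zero]
  · have hc := LinearMap.congr_fun (diagOp_comm_POp q f k) w
    simp only [Module.End.mul_apply] at hc
    rw [hxw, hc]
  · intro h0
    apply hXw
    have hc := LinearMap.congr_fun (diagOp_comm_XOp q f k (k - 2)) w
    simp only [Module.End.mul_apply] at hc
    have h2 : diagOp f (XOp K q k (k - 2) w) = 0 := by rw [hc, h0]
    rw [← diagOp_cancel f hf (XOp K q k (k - 2) w), h2, map_zero]

lemma idealGen_diag {n : ℕ} {f : Fin N → K} (hf : ∀ a, f a ≠ 0) {z : TV K N}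
    (hz : z ∈ idealGen K {v : TV K N | ∃ k, k < n ∧ IsRightPreRel K q k v}) :
    diagOp f z ∈ idealGen K {v : TV K N | ∃ k, k < n ∧ IsRightPreRel K q k v} := by
  rw [idealGen] at hz ⊢
  induction hz using Submodule.span_induction with
  | mem y hy =>
    obtain ⟨a, b, x, ⟨k, hk, hx⟩, rfl⟩ := hy
    refine Submodule.subset_span ⟨diagOp f a, diagOp f b, diagOp f x,
      ⟨k, hk, prerel_diag q hf hx⟩, ?_⟩
    rw [diagOp_mul, diagOp_mul]
  | zero => simp
  | add y z _ _ h1 h2 => rw [map_add]; exact Submodule.add_mem _ h1 h2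
  | smul r y _ h1 => rw [map_smul]; exact Submodule.smul_mem _ r h1

lemma POp_factor {n : ℕ} (hn : 2 ≤ n) :
    POp K q n = (1 - Rop q n 1) *
      ((List.range' 2 (n - 2)).map (fun j => 1 - Rop q n j)).prod := by
  rw [POp, show n - 1 = (n - 2) + 1 by omega, List.range'_succ, List.map_cons,
    List.prod_cons]
  rfl

lemma isShift_POpTail {n : ℕ} (hn : 2 ≤ n) :
    IsShift (((List.range' 2 (n + 1 - 2)).map (fun j => 1 - Rop q (n+1) j)).prod)
      (POp K q n) := by
  have h1 : POp K q n = ((List.range' 1 (n - 1)).map (fun j => 1 - Rop q n j)).prod := rfl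
  rw [h1, show n + 1 - 2 = n - 1 by omega, ← range'_map_succ 1 (n - 1)]
  refine isShift_prod_map _ _ _ (fun j hj => ?_)
  have hj1 : 1 ≤ j := by
    simp only [List.mem_range'_1] at hj; omega
  exact IsShift.one.sub (isShift_Rop q hj1)

lemma isShift_XOp {n : ℕ} (hn : 2 ≤ n) :
    IsShift (XOp K q (n+1) (n - 1)) (TpOp K q n) := by
  have h1 : XOp K q (n+1) (n - 1) = ((List.range' 2 (n - 1)).map
      (fun j => 1 - wordOp K q (n :: (List.range' j (n + 1 - j)).reverse))).prod := by
    rw [XOp, show n + 1 - (n - 1) = 2 by omega, Nat.add_sub_cancel]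
  have h2 : TpOp K q n = ((List.range' 1 (n - 1)).map
      (fun j => 1 - wordOp K q ((n - 1) :: (List.range' j (n - j)).reverse))).prod := rfl
  rw [h1, h2, ← range'_map_succ 1 (n - 1)]
  refine isShift_prod_map _ _ _ (fun j hj => ?_)
  have hj1 : 1 ≤ j ∧ j < n := by
    simp only [List.mem_range'_1] at hj; omega
  refine IsShift.one.sub ?_
  have hw : (n :: (List.range' (j+1) (n + 1 - (j+1))).reverse)
      = (((n - 1) :: (List.range' j (n - j)).reverse).map (· + 1)) := by
    rw [List.map_cons, List.map_reverse, range'_map_succ,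
      show n - 1 + 1 = n by omega, show n + 1 - (j+1) = n - j by omega]
  rw [hw]
  refine isShift_wordOp q _ (fun t ht => ?_)
  simp only [List.mem_cons, List.mem_reverse, List.mem_range'_1] at ht
  omega

lemma mainA (hq : ∀ i j, q i j ≠ 0) : ∀ n, 2 ≤ n → ∀ w ∈ deg K N n,
    XOp K q n (n - 2) w = 0 →
    POp K q n w ∈ idealGen K {v : TV K N | ∃ k, k < n ∧ IsRightPreRel K q k v} := by
  intro n
  induction n using Nat.strong_induction_on with
  | _ n ihn =>
    intro hn w hw hX
    by_cases hn2 : n = 2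
    · subst hn2
      have hXone : XOp K q 2 (2 - 2) = 1 := by
        rw [XOp]
        simp
      rw [hXone] at hX
      have hw0 : w = 0 := hX
      rw [hw0, map_zero]
      exact Submodule.zero_mem _
    · obtain ⟨m, rfl⟩ : ∃ m, n = m + 1 := ⟨n - 1, by omega⟩
      have hm : 2 ≤ m := by omega
      have hX' : XOp K q (m+1) (m - 1) w = 0 := by
        rwa [show m + 1 - 2 = m - 1 by omega] at hX
      have hdecomp : w = ∑ i : Fin N, ms [i] 1 * lcoef i w :=
        deg_decomp (by omega) hw
      have hdegi : ∀ i : Fin N, lcoef i w ∈ deg K N m := fun i => by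
        have := lcoef_mem_deg i hw
        rwa [Nat.add_sub_cancel] at this
      have hshX : IsShift (XOp K q (m+1) (m - 1)) (TpOp K q m) := isShift_XOp q hm
      have hTp : ∀ i : Fin N, TpOp K q m (lcoef i w) = 0 := by
        intro j
        have e : XOp K q (m+1) (m - 1) w
            = ∑ i : Fin N, ms [i] 1 * TpOp K q m (lcoef i w) := by
          conv_lhs => rw [hdecomp]
          rw [map_sum]
          exact Finset.sum_congr rfl fun i _ => hshX i (lcoef i w)
        have e3 : ∑ i : Fin N, ms [i] 1 * TpOp K q m (lcoef i w) = 0 := e.symm.trans hX'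
        have e2 := congrArg (lcoef j) e3
        rw [map_sum, map_zero] at e2
        simp only [lcoef_lmul] at e2
        rw [Finset.sum_ite_eq'] at e2
        simpa using e2
      have hB : ∀ i : Fin N, POp K q m (lcoef i w) ∈
          idealGen K {v : TV K N | ∃ k, k < m + 1 ∧ IsRightPreRel K q k v} := by
        intro i
        by_cases hXi : XOp K q m (m - 2) (lcoef i w) = 0
        · exact idealGen_mono (fun v hv => by
            obtain ⟨k, hk, hkv⟩ := hv; exact ⟨k, by omega, hkv⟩)
            (ihn m (by omega) hm (lcoef i w) (hdegi i) hXi)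
        · by_cases hP0 : POp K q m (lcoef i w) = 0
          · rw [hP0]; exact Submodule.zero_mem _
          · refine Submodule.subset_span ⟨1, 1, POp K q m (lcoef i w),
              ⟨m, by omega, ?_⟩, by rw [one_mul, mul_one]⟩
            refine ⟨hP0, presDeg_POp q m m _ (hdegi i), ?_, lcoef i w, hdegi i, rfl, hXi⟩
            have hTP := TP_eq_Tp q m hm (lcoef i w) (hdegi i)
            simp only [Module.End.mul_apply] at hTP
            rw [hTP, hTp i]
      set J := idealGen K {v : TV K N | ∃ k, k < m + 1 ∧ IsRightPreRel K q k v} with hJ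
      set Tail := ((List.range' 2 (m + 1 - 2)).map (fun j => 1 - Rop q (m+1) j)).prod
        with hTaildef
      have hshP : IsShift Tail (POp K q m) := isShift_POpTail q hm
      have hTail : Tail w = ∑ i : Fin N, ms [i] 1 * POp K q m (lcoef i w) := by
        conv_lhs => rw [hdecomp]
        rw [map_sum]
        exact Finset.sum_congr rfl fun i _ => hshP i (lcoef i w)
      have hTail_mem : Tail w ∈ J := by
        rw [hTail]
        exact Submodule.sum_mem _ fun i _ => idealGen_mul_left _ (hB i)
      have hrot_mem : Rop q (m+1) 1 (Tail w) ∈ J := by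
        rw [hTail, map_sum]
        refine Submodule.sum_mem _ fun i _ => ?_
        rw [rot_lmul q i (presDeg_POp q m m _ (hdegi i))]
        exact idealGen_mul_right _ (idealGen_diag q (fun a => hq i a) (hB i))
      have hfinal : POp K q (m+1) w = Tail w - Rop q (m+1) 1 (Tail w) := by
        rw [POp_factor q (show 2 ≤ m + 1 by omega)]
        simp only [Module.End.mul_apply, LinearMap.sub_apply, Module.End.one_apply]
        rfl
      rw [hfinal]
      exact Submodule.sub_mem _ hTail_mem hrot_mem

end Main

/-- if `w ∈ V^{⊗n}` satisfies `T_n' w = 0` and `X_{n−2,n} w = 0`, then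
`P_n w` lies in the two-sided ideal of `T(V)` generated by the right pre-relations of
degree strictly less than `n`. -/
theorem statement_13 (K : Type*) [Field K] [CharZero K] (N : ℕ) (hN : 1 ≤ N)
    (q : Fin N → Fin N → K) (hq : ∀ i j, q i j ≠ 0) (n : ℕ) (hn : 2 ≤ n)
    (w : TV K N) (hw : w ∈ deg K N n)
    (h1 : TpOp K q n w = 0) (h2 : XOp K q n (n - 2) w = 0) :
    POp K q n w ∈
      idealGen K {v : TV K N | ∃ k : ℕ, k < n ∧ IsRightPreRel K q k v} := by
  exact mainA q hq n hn w hw h2
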